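/- A qubit j belongs to some su(2) block for ψ if and only if dim_ℝ(P_j(K_ψ)) > 1, where P_j(K_ψ) is the image of K_ψ under the projection P_j, a real subspace of su(2). -/

import Mathlib

open scoped Matrix

noncomputable section

/-- The `n`-qubit Hilbert space `(ℂ²)^{⊗n}`, realized as functions `(Fin n → Fin 2) → ℂ`. -/
abbrev QState (n : ℕ) := (Fin n → Fin 2) → ℂ

/-- The ambient real vector space `ℝ × (Fin n → M₂(ℂ))` containing `u(1) ⊕ su(2)^n`. -/
abbrev GV (n : ℕ) := ℝ × (Fin n → Matrix (Fin 2) (Fin 2) ℂ)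

/-- `su(2)`: traceless skew-Hermitian `2 × 2` complex matrices, as a real subspace. -/
def su2 : Submodule ℝ (Matrix (Fin 2) (Fin 2) ℂ) where
  carrier := {X | Xᴴ = -X ∧ X.trace = 0}
  add_mem' := by
    rintro X Y ⟨hX1, hX2⟩ ⟨hY1, hY2⟩
    exact ⟨by rw [Matrix.conjTranspose_add, hX1, hY1, neg_add],
           by rw [Matrix.trace_add, hX2, hY2, add_zero]⟩
  zero_mem' := ⟨by simp, by simp⟩
  smul_mem' := by
    rintro r X ⟨hX1, hX2⟩
    exact ⟨by rw [Matrix.conjTranspose_smul, hX1, star_trivial, smul_neg],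
           by rw [Matrix.trace_smul, hX2, smul_zero]⟩

/-- The Lie algebra `g = u(1) ⊕ su(2)^n` as a real subspace of `GV n`. -/
def gSub (n : ℕ) : Submodule ℝ (GV n) :=
  (⊤ : Submodule ℝ ℝ).prod (Submodule.pi Set.univ fun _ => su2)

/-- `g_S`: elements `(0, X)` of `g` with `X j = 0` for `j ∉ S`. -/
def gS {n : ℕ} (S : Set (Fin n)) : Submodule ℝ (GV n) :=
  (⊥ : Submodule ℝ ℝ).prod (Submodule.pi Set.univ fun j =>
    letI := Classical.dec (j ∈ S)
    if j ∈ S then su2 else ⊥)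

/-- `ḡ_S`: elements `(t, X)` of `g` with `X j = 0` for `j ∈ S`. -/
def gBar {n : ℕ} (S : Set (Fin n)) : Submodule ℝ (GV n) :=
  (⊤ : Submodule ℝ ℝ).prod (Submodule.pi Set.univ fun j =>
    letI := Classical.dec (j ∈ S)
    if j ∈ S then (⊥ : Submodule ℝ (Matrix (Fin 2) (Fin 2) ℂ)) else su2)

/-- The projection `P_j : g → su(2)`, `(t, X) ↦ X j`. -/
def Pj {n : ℕ} (j : Fin n) : GV n →ₗ[ℝ] Matrix (Fin 2) (Fin 2) ℂ :=
  (LinearMap.proj j).comp (LinearMap.snd ℝ ℝ (Fin n → Matrix (Fin 2) (Fin 2) ℂ))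

/-- Apply the matrix `X` to qubit `j` of the state `ψ`. -/
def applySingle {n : ℕ} (j : Fin n) (X : Matrix (Fin 2) (Fin 2) ℂ) (ψ : QState n) : QState n :=
  fun I => ∑ k : Fin 2, X (I j) k * ψ (Function.update I j k)

/-- The infinitesimal local-unitary action: `dΦ_ψ(t, X) = i t ψ + Σ_j X_j ψ`. -/
def dPhi {n : ℕ} (ψ : QState n) : GV n →ₗ[ℝ] QState n where
  toFun x := fun I => Complex.I * (x.1 : ℂ) * ψ I + ∑ j, applySingle j (x.2 j) ψ I
  map_add' x y := by
    funext I
    simp only [applySingle, Prod.fst_add, Prod.snd_add, Pi.add_apply, Matrix.add_apply,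
      Complex.ofReal_add, add_mul, Finset.sum_add_distrib]
    ring
  map_smul' r x := by
    funext I
    simp only [applySingle, Prod.smul_fst, Prod.smul_snd, Pi.smul_apply, Matrix.smul_apply,
      smul_eq_mul, Complex.real_smul, Complex.ofReal_mul, RingHom.id_apply,
      Finset.mul_sum, mul_add]
    congr 1
    · ring
    · refine Finset.sum_congr rfl fun j _ => Finset.sum_congr rfl fun k _ => by ring

/-- The stabilizer subalgebra `K_ψ = {(t,X) ∈ g : dΦ_ψ(t,X) = 0}`. -/
def stab {n : ℕ} (ψ : QState n) : Submodule ℝ (GV n) :=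
  gSub n ⊓ LinearMap.ker (dPhi ψ)

/-- The componentwise bracket on `g` (zero in the `u(1)` component). -/
def gBracket {n : ℕ} (x y : GV n) : GV n :=
  (0, fun j => ⁅x.2 j, y.2 j⁆)

/-- An `su(2)` block for `ψ`: a set `S` of qubits with `dim (K_ψ ∩ g_S) > 1` and
`dim (K_ψ ∩ g_{S'}) = 0` for every proper subset `S' ⊊ S`. -/
def Su2Block {n : ℕ} (ψ : QState n) (S : Set (Fin n)) : Prop :=
  1 < Module.finrank ℝ ↥(stab ψ ⊓ gS S) ∧
  ∀ S' : Set (Fin n), S' ⊂ S → Module.finrank ℝ ↥(stab ψ ⊓ gS S') = 0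

/-- The union `B` of all `su(2)` blocks for `ψ`. -/
def blockUnion {n : ℕ} (ψ : QState n) : Set (Fin n) :=
  {q | ∃ S : Set (Fin n), Su2Block ψ S ∧ q ∈ S}

/-- The number `p` of `su(2)` blocks for `ψ`. -/
def blockCount {n : ℕ} (ψ : QState n) : ℕ :=
  {S : Set (Fin n) | Su2Block ψ S}.ncard

/-- `ψ` factors across the set `S` of qubits: `ψ(I) = φ(I|_S) · χ(I|_{Sᶜ})`. -/
def FactorsAcross {n : ℕ} (ψ : QState n) (S : Set (Fin n)) : Prop :=
  ∃ (φ : (↥S → Fin 2) → ℂ) (χ : (↥(Sᶜ) → Fin 2) → ℂ),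
    ∀ I : Fin n → Fin 2, ψ I = φ (fun j => I j.1) * χ (fun j => I j.1)

/-- `ψ` is a nonproduct state: it factors across no proper nonempty set of qubits. -/
def IsNonproduct {n : ℕ} (ψ : QState n) : Prop :=
  ∀ S : Set (Fin n), S ≠ ∅ → S ≠ Set.univ → ¬ FactorsAcross ψ S

/-- `ψ` has a single-qubit factor. -/
def HasSingleQubitFactor {n : ℕ} (ψ : QState n) : Prop :=
  ∃ j : Fin n, FactorsAcross ψ {j}

/-- Apply the local unitary (or just local linear) transformation `⊗_j U_j` to `ψ`. -/
def luApply {n : ℕ} (U : Fin n → Matrix (Fin 2) (Fin 2) ℂ) (ψ : QState n) : QState n :=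
  fun I => ∑ J : Fin n → Fin 2, (∏ j, U j (I j) (J j)) * ψ J

/-- Local unitary equivalence of `n`-qubit states. -/
def LUEquiv {n : ℕ} (ψ ψ' : QState n) : Prop :=
  ∃ U : Fin n → Matrix (Fin 2) (Fin 2) ℂ,
    (∀ j, U j ∈ Matrix.unitaryGroup (Fin 2) ℂ) ∧ ψ' = luApply U ψ

/-- The two-qubit singlet state `φ(a,b) = δ_{a0} δ_{b1} − δ_{a1} δ_{b0}`. -/
def singletFn : Fin 2 → Fin 2 → ℂ := fun a b =>
  if a = 0 ∧ b = 1 then 1 else if a = 1 ∧ b = 0 then -1 else 0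

/-- `ψ` has a singlet factor: it is LU-equivalent to a state that factors across a
two-element set of qubits, with the two-qubit factor being the singlet. -/
def HasSingletFactor {n : ℕ} (ψ : QState n) : Prop :=
  ∃ ψ' : QState n, LUEquiv ψ ψ' ∧ ∃ j k : Fin n, j ≠ k ∧
    ∃ χ : (↥(({j, k} : Set (Fin n))ᶜ) → Fin 2) → ℂ,
      ∀ I : Fin n → Fin 2, ψ' I = singletFn (I j) (I k) * χ (fun q => I q.1)

/-- The matrix `A = diag(i, −i) ∈ su(2)`. -/
def matA : Matrix (Fin 2) (Fin 2) ℂ := !![Complex.I, 0; 0, -Complex.I]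

/-- The generalized `n`-qubit GHZ state `α|0…0⟩ + β|1…1⟩`. -/
def ghz (n : ℕ) (α β : ℂ) : QState n := fun I =>
  if ∀ j, I j = 0 then α else if ∀ j, I j = 1 then β else 0

/-!
If `S` is a block containing `j`, then `K_ψ ∩ g_{S ∖ {j}} = 0`, so `P_j` is injective on
`K_ψ ∩ g_S`, whose dimension exceeds one.

Conversely, `K_ψ ∩ ker P_j` is an ideal of `K_ψ`, and so is its orthogonal complement `L` in `K_ψ`
for the invariant inner product `gForm`. `P_j` maps `L` injectively onto a subalgebra of `su(2)`
of dimension at least two, hence onto `su(2)`. As `su(2)` is simple and perfect, `L` has no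
`u(1)` part and every `P_k` with `k` in the support `S` of `L` is injective on `L`. So
`L ⊆ K_ψ ∩ g_S`, and an element of `K_ψ ∩ g_{S'}` with `S' ⊊ S` vanishes at a qubit of `S`,
hence commutes with `L`, hence vanishes. The facts about `su(2)` are read off from `(ℝ³, ⨯₃)`.
-/

lemma eq_zero_of_forall_cross_eq_zero {u : Fin 3 → ℝ} (h : ∀ v, u ⨯₃ v = 0) : u = 0 := by
  by_contra hu
  obtain ⟨v, huv⟩ := exists_linearIndependent_pair_of_one_lt_finrank
    (by simp : 1 < Module.finrank ℝ (Fin 3 → ℝ)) hu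
  exact crossProduct_ne_zero_iff_linearIndependent.mpr huv (h v)

lemma cross_notMem_span_pair {u v : Fin 3 → ℝ} (h : u ⨯₃ v ≠ 0) :
    u ⨯₃ v ∉ Submodule.span ℝ {u, v} := by
  intro hspan
  obtain ⟨a, b, hab⟩ := Submodule.mem_span_pair.mp hspan
  have horth : u ⨯₃ v ⬝ᵥ (a • u + b • v) = 0 := by
    simp only [dotProduct_add, dotProduct_smul, dotProduct_comm _ u, dotProduct_comm _ v,
      dot_self_cross, dot_cross_self, smul_zero, add_zero]
  rw [hab, dotProduct_self_eq_zero] at horth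
  exact h horth

/-- The cross product of two independent vectors of `W` is a third one, orthogonal to both. -/
lemma Submodule.eq_top_of_cross_mem {W : Submodule ℝ (Fin 3 → ℝ)}
    (hW : ∀ u ∈ W, ∀ v ∈ W, u ⨯₃ v ∈ W) (h2 : 2 ≤ Module.finrank ℝ W) : W = ⊤ := by
  obtain ⟨f, hf⟩ := exists_linearIndependent_of_le_finrank h2
  set u : Fin 3 → ℝ := ((f 0 : W) : Fin 3 → ℝ)
  set v : Fin 3 → ℝ := ((f 1 : W) : Fin 3 → ℝ)
  have huv : LinearIndependent ℝ ![u, v] := by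
    have huv : ![u, v] = W.subtype ∘ f := by ext i : 1; fin_cases i <;> rfl
    exact huv ▸ hf.map' W.subtype W.ker_subtype
  have hcross := crossProduct_ne_zero_iff_linearIndependent.mpr huv
  have h3 : LinearIndependent ℝ ![u ⨯₃ v, u, v] :=
    huv.finCons (by rw [Matrix.range_cons_cons_empty]; exact cross_notMem_span_pair hcross)
  have hle : Submodule.span ℝ (Set.range ![u ⨯₃ v, u, v]) ≤ W := by
    rw [Submodule.span_le, Set.range_subset_iff]
    intro i
    fin_cases i
    exacts [hW u (f 0).2 v (f 1).2, (f 0).2, (f 1).2]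
  have := Submodule.finrank_mono hle
  rw [finrank_span_eq_card h3, Fintype.card_fin] at this
  exact Submodule.eq_top_of_finrank_eq (le_antisymm (Submodule.finrank_le W) (by simpa using this))

lemma Submodule.eq_top_of_cross_mem_of_ne_bot {I : Submodule ℝ (Fin 3 → ℝ)}
    (hI : ∀ v, ∀ u ∈ I, v ⨯₃ u ∈ I) (hbot : I ≠ ⊥) : I = ⊤ := by
  obtain ⟨u, hu, hu0⟩ := I.ne_bot_iff.mp hbot
  rw [eq_top_iff]
  intro v _
  have huu : u ⬝ᵥ u ≠ 0 := dotProduct_self_eq_zero.not.mpr hu0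
  -- `v` is recovered from `u ⨯₃ (u ⨯₃ v) = (u ⬝ᵥ v) • u - (u ⬝ᵥ u) • v`.
  have hv : v = (u ⬝ᵥ u)⁻¹ • ((u ⬝ᵥ v) • u - u ⨯₃ (u ⨯₃ v)) := by
    rw [cross_cross_eq_smul_sub_smul', sub_sub_cancel, smul_smul,
      inv_mul_cancel₀ huu, one_smul]
  rw [hv]
  refine I.smul_mem _ (I.sub_mem (I.smul_mem _ hu) (hI u _ ?_))
  rw [← cross_anticomm]
  exact I.neg_mem (hI v u hu)

/-- `su2Of v = (i/2)(v₀ σ_z + v₁ σ_y + v₂ σ_x)`; the factor `1/2` makes the matrix commutator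
correspond to the cross product. -/
def su2Of : (Fin 3 → ℝ) →ₗ[ℝ] Matrix (Fin 2) (Fin 2) ℂ where
  toFun v := (1 / 2 : ℂ) •
    !![Complex.I * v 0, v 1 + Complex.I * v 2; -v 1 + Complex.I * v 2, -(Complex.I * v 0)]
  map_add' u v := by
    ext i k; fin_cases i <;> fin_cases k <;> simp <;> ring
  map_smul' r v := by
    ext i k; fin_cases i <;> fin_cases k <;> simp <;> ring

lemma su2Of_injective : Function.Injective su2Of := by
  rw [← LinearMap.ker_eq_bot, LinearMap.ker_eq_bot']
  intro v hv
  have h00 := congrFun (congrFun hv 0) 0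
  have h01 := congrFun (congrFun hv 0) 1
  simp [su2Of, Complex.ext_iff] at h00 h01
  ext i; fin_cases i <;> simp [h00, h01]

lemma range_su2Of : LinearMap.range su2Of = su2 := by
  ext X
  constructor
  · rintro ⟨v, rfl⟩
    refine ⟨?_, ?_⟩
    · ext i k; fin_cases i <;> fin_cases k <;> simp [su2Of, Complex.ext_iff]
    · simp [su2Of, Matrix.trace_fin_two]
  · rintro ⟨hskew, htr⟩
    have hc : ∀ a b, star (X b a) = -X a b := fun a b => congrFun (congrFun hskew a) b
    have h00 := hc 0 0
    have h01 := hc 0 1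
    have htr' : X 0 0 + X 1 1 = 0 := by simpa [Matrix.trace_fin_two] using htr
    simp [Complex.ext_iff] at h00 h01 htr'
    refine ⟨![2 * (X 0 0).im, 2 * (X 0 1).re, 2 * (X 0 1).im], ?_⟩
    ext i k; fin_cases i <;> fin_cases k <;> apply Complex.ext <;> simp [su2Of] <;> linarith

lemma lie_su2Of (u v : Fin 3 → ℝ) : ⁅su2Of u, su2Of v⁆ = su2Of (u ⨯₃ v) := by
  rw [Ring.lie_def]
  ext i k
  fin_cases i <;> fin_cases k <;>
    simp [su2Of, cross_apply, Complex.ext_iff] <;>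
    constructor <;> ring

lemma finrank_su2 : Module.finrank ℝ su2 = 3 := by
  rw [← range_su2Of, LinearMap.finrank_range_of_inj su2Of_injective]
  simp

lemma map_comap_su2Of {W : Submodule ℝ (Matrix (Fin 2) (Fin 2) ℂ)} (hW : W ≤ su2) :
    (W.comap su2Of).map su2Of = W :=
  Submodule.map_comap_eq_of_le (range_su2Of ▸ hW)

lemma finrank_comap_su2Of {W : Submodule ℝ (Matrix (Fin 2) (Fin 2) ℂ)} (hW : W ≤ su2) :
    Module.finrank ℝ (W.comap su2Of) = Module.finrank ℝ W := by
  conv_rhs => rw [← map_comap_su2Of hW]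
  exact (Submodule.equivMapOfInjective _ su2Of_injective _).finrank_eq

lemma eq_zero_of_forall_lie_su2_eq_zero {X : Matrix (Fin 2) (Fin 2) ℂ} (hX : X ∈ su2)
    (h : ∀ Y ∈ su2, ⁅X, Y⁆ = 0) : X = 0 := by
  obtain ⟨u, rfl⟩ : X ∈ LinearMap.range su2Of := range_su2Of ▸ hX
  have hu : u = 0 := eq_zero_of_forall_cross_eq_zero fun v => su2Of_injective <| by
    rw [← lie_su2Of, map_zero]
    exact h _ (range_su2Of ▸ LinearMap.mem_range_self su2Of v)
  rw [hu, map_zero]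

lemma eq_su2_of_lie_mem {W : Submodule ℝ (Matrix (Fin 2) (Fin 2) ℂ)} (hW : W ≤ su2)
    (hbr : ∀ X ∈ W, ∀ Y ∈ W, ⁅X, Y⁆ ∈ W) (h2 : 2 ≤ Module.finrank ℝ W) : W = su2 := by
  have htop : W.comap su2Of = ⊤ := by
    refine Submodule.eq_top_of_cross_mem (fun u hu v hv => ?_) (finrank_comap_su2Of hW ▸ h2)
    rw [Submodule.mem_comap, ← lie_su2Of]
    exact hbr _ hu _ hv
  rw [← map_comap_su2Of hW, htop, Submodule.map_top, range_su2Of]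

lemma eq_su2_of_lie_mem_of_ne_bot {I : Submodule ℝ (Matrix (Fin 2) (Fin 2) ℂ)} (hI : I ≤ su2)
    (hstab : ∀ X ∈ su2, ∀ Y ∈ I, ⁅X, Y⁆ ∈ I) (hbot : I ≠ ⊥) : I = su2 := by
  have htop : I.comap su2Of = ⊤ := by
    refine Submodule.eq_top_of_cross_mem_of_ne_bot (fun v u hu => ?_) fun h => hbot ?_
    · rw [Submodule.mem_comap, ← lie_su2Of]
      exact hstab _ (range_su2Of ▸ LinearMap.mem_range_self su2Of v) _ hu
    · rw [← map_comap_su2Of hI, h, Submodule.map_bot]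
  rw [← map_comap_su2Of hI, htop, Submodule.map_top, range_su2Of]

lemma lie_mem_su2 {X Y : Matrix (Fin 2) (Fin 2) ℂ} (hX : X ∈ su2) (hY : Y ∈ su2) :
    ⁅X, Y⁆ ∈ su2 := by
  obtain ⟨u, rfl⟩ : X ∈ LinearMap.range su2Of := range_su2Of ▸ hX
  obtain ⟨v, rfl⟩ : Y ∈ LinearMap.range su2Of := range_su2Of ▸ hY
  rw [lie_su2Of, ← range_su2Of]
  exact LinearMap.mem_range_self _ _

lemma exists_lie_ne_zero_su2 : ∃ X ∈ su2, ∃ Y ∈ su2, ⁅X, Y⁆ ≠ 0 := by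
  obtain ⟨X, hX, hX0⟩ := Submodule.exists_mem_ne_zero_of_ne_bot fun (h : su2 = ⊥) => by
    have := finrank_su2
    rw [h, finrank_bot] at this
    omega
  by_contra! h
  exact hX0 (eq_zero_of_forall_lie_su2_eq_zero hX (h X hX))

section LinearAlgebra

variable {K V V' : Type*} [Field K] [AddCommGroup V] [Module K V] [FiniteDimensional K V]
  [AddCommGroup V'] [Module K V']

lemma Submodule.finrank_map_add_finrank_inf_ker (W : Submodule K V) (f : V →ₗ[K] V') :
    Module.finrank K (W.map f) + Module.finrank K ↥(W ⊓ LinearMap.ker f) = Module.finrank K W := by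
  rw [← LinearMap.range_domRestrict, ← Submodule.map_comap_subtype,
    Submodule.finrank_map_subtype_eq, ← LinearMap.ker_domRestrict]
  exact LinearMap.finrank_range_add_finrank_ker _

lemma Submodule.finrank_map_of_disjoint_ker {W : Submodule K V} {f : V →ₗ[K] V'}
    (h : Disjoint W (LinearMap.ker f)) : Module.finrank K (W.map f) = Module.finrank K W := by
  have := W.finrank_map_add_finrank_inf_ker f
  rwa [h.eq_bot, finrank_bot, add_zero] at this

lemma LinearMap.BilinForm.finrank_le_finrank_inf_orthogonal_add (B : LinearMap.BilinForm K V)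
    (W N : Submodule K V) :
    Module.finrank K W ≤ Module.finrank K ↥(W ⊓ B.orthogonal N) + Module.finrank K N := by
  have hsup := Submodule.finrank_sup_add_finrank_inf_eq W (B.orthogonal N)
  have horth := B.finrank_add_finrank_orthogonal' N
  have hle := (W ⊔ B.orthogonal N).finrank_le
  omega

end LinearAlgebra

section Qubits

variable {n : ℕ}

def qubitOp (j : Fin n) :
    Matrix (Fin 2) (Fin 2) ℂ →ₗ[ℂ] Module.End ℂ (QState n) :=
  LinearMap.mk₂ ℂ (applySingle j)
    (fun X Y ψ => by funext I; simp [applySingle, add_mul, Finset.sum_add_distrib])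
    (fun c X ψ => by funext I; simp [applySingle]; ring)
    (fun X ψ φ => by funext I; simp [applySingle, mul_add, Finset.sum_add_distrib])
    (fun c X ψ => by funext I; simp [applySingle]; ring)

lemma qubitOp_apply (j : Fin n) (X : Matrix (Fin 2) (Fin 2) ℂ) (ψ : QState n) :
    qubitOp j X ψ = applySingle j X ψ := rfl

lemma qubitOp_mul (j : Fin n) (X Y : Matrix (Fin 2) (Fin 2) ℂ) :
    qubitOp j (X * Y) = qubitOp j X * qubitOp j Y := by
  refine LinearMap.ext fun ψ => funext fun I => ?_
  simp only [Module.End.mul_apply, qubitOp_apply, applySingle, Function.update_self,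
    Function.update_idem, Matrix.mul_apply, Finset.mul_sum, Finset.sum_mul]
  rw [Finset.sum_comm]
  exact Finset.sum_congr rfl fun m _ => Finset.sum_congr rfl fun k _ => by ring

lemma lie_qubitOp (j : Fin n) (X Y : Matrix (Fin 2) (Fin 2) ℂ) :
    ⁅qubitOp j X, qubitOp j Y⁆ = qubitOp j ⁅X, Y⁆ := by
  rw [Ring.lie_def, Ring.lie_def, map_sub, qubitOp_mul, qubitOp_mul]

lemma commute_qubitOp {j k : Fin n} (h : j ≠ k) (X Y : Matrix (Fin 2) (Fin 2) ℂ) :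
    Commute (qubitOp j X) (qubitOp k Y) := by
  refine LinearMap.ext fun ψ => funext fun I => ?_
  simp only [Module.End.mul_apply, qubitOp_apply, applySingle, Finset.mul_sum]
  rw [Finset.sum_comm]
  refine Finset.sum_congr rfl fun p _ => Finset.sum_congr rfl fun m _ => ?_
  rw [Function.update_of_ne h.symm, Function.update_of_ne h, Function.update_comm h]
  ring

/-- The representation of `g` on `H` whose orbit map at `ψ` is `dΦ_ψ`. -/
def actionOp (x : GV n) : Module.End ℂ (QState n) :=
  (Complex.I * x.1) • 1 + ∑ j, qubitOp j (x.2 j)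

lemma dPhi_eq_actionOp (ψ : QState n) (x : GV n) : dPhi ψ x = actionOp x ψ := by
  funext I
  simp [dPhi, actionOp, qubitOp_apply]

lemma actionOp_gBracket (x y : GV n) :
    actionOp (gBracket x y) = ⁅actionOp x, actionOp y⁆ := by
  have hscalar : ∀ (c d : ℂ) (A B : Module.End ℂ (QState n)), ⁅c • 1 + A, d • 1 + B⁆ = ⁅A, B⁆ := by
    intro c d A B
    simp only [Ring.lie_def, add_mul, mul_add, smul_mul_assoc, mul_smul_comm, one_mul, mul_one,
      smul_add, smul_smul, mul_comm c d]
    abel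
  have hsum : ⁅∑ j, qubitOp j (x.2 j), ∑ k, qubitOp k (y.2 k)⁆ =
      ∑ j, ∑ k, ⁅qubitOp j (x.2 j), qubitOp k (y.2 k)⁆ := by
    simp only [Ring.lie_def, Finset.sum_mul, Finset.mul_sum, Finset.sum_sub_distrib]
    exact congrArg (· - _) Finset.sum_comm
  have hdiag : ∀ j, ∑ k, ⁅qubitOp j (x.2 j), qubitOp k (y.2 k)⁆ = qubitOp j ⁅x.2 j, y.2 j⁆ := by
    intro j
    rw [Finset.sum_eq_single j (fun k _ hkj => ?_) (by simp), lie_qubitOp]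
    rw [Ring.lie_def, (commute_qubitOp hkj.symm _ _).eq, sub_self]
  simp only [actionOp]
  rw [hscalar, hsum, Finset.sum_congr rfl fun j _ => hdiag j]
  simp [gBracket]

lemma Pj_apply (j : Fin n) (x : GV n) : Pj j x = x.2 j := rfl

lemma Pj_gBracket (j : Fin n) (x y : GV n) :
    Pj j (gBracket x y) = ⁅Pj j x, Pj j y⁆ := rfl

lemma gBracket_mem_ker_Pj_left {k : Fin n} {x : GV n} (hx : x ∈ LinearMap.ker (Pj k))
    (y : GV n) : gBracket x y ∈ LinearMap.ker (Pj k) := by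
  rw [LinearMap.mem_ker] at hx ⊢
  rw [Pj_gBracket, hx, Ring.lie_def, zero_mul, mul_zero, sub_zero]

lemma gBracket_mem_ker_Pj_right {k : Fin n} (x : GV n) {y : GV n}
    (hy : y ∈ LinearMap.ker (Pj k)) : gBracket x y ∈ LinearMap.ker (Pj k) := by
  rw [LinearMap.mem_ker] at hy ⊢
  rw [Pj_gBracket, hy, Ring.lie_def, zero_mul, mul_zero, sub_zero]

lemma mem_gSub {x : GV n} : x ∈ gSub n ↔ ∀ k, x.2 k ∈ su2 := by
  simp [gSub, Submodule.mem_prod, Submodule.mem_pi]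

lemma mem_gS {S : Set (Fin n)} {x : GV n} :
    x ∈ gS S ↔ x.1 = 0 ∧ (∀ k ∈ S, x.2 k ∈ su2) ∧ ∀ k ∉ S, x.2 k = 0 := by
  simp only [gS, Submodule.mem_prod, Submodule.mem_pi, Submodule.mem_bot, Set.mem_univ,
    true_imp_iff]
  refine and_congr_right fun _ => ⟨fun h => ⟨fun k hk => ?_, fun k hk => ?_⟩, fun h k => ?_⟩
  · simpa [hk] using h k
  · simpa [hk] using h k
  · by_cases hk : k ∈ S <;> simp [hk, h.1, h.2]

lemma stab_le_gSub (ψ : QState n) : stab ψ ≤ gSub n := inf_le_left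

lemma gBracket_mem_stab {ψ : QState n} {x y : GV n} (hx : x ∈ stab ψ)
    (hy : y ∈ stab ψ) : gBracket x y ∈ stab ψ := by
  obtain ⟨hxg, hxψ⟩ := Submodule.mem_inf.mp hx
  obtain ⟨hyg, hyψ⟩ := Submodule.mem_inf.mp hy
  rw [LinearMap.mem_ker, dPhi_eq_actionOp] at hxψ hyψ
  refine Submodule.mem_inf.mpr ⟨mem_gSub.mpr fun k => lie_mem_su2 (mem_gSub.mp hxg k)
    (mem_gSub.mp hyg k), ?_⟩
  rw [LinearMap.mem_ker, dPhi_eq_actionOp, actionOp_gBracket, Ring.lie_def,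
    LinearMap.sub_apply, Module.End.mul_apply, Module.End.mul_apply, hxψ, hyψ, map_zero,
    map_zero, sub_zero]

variable (n) in
def gForm : LinearMap.BilinForm ℝ (GV n) :=
  LinearMap.mk₂ ℝ (fun x y => x.1 * y.1 + ∑ k, (x.2 k * (y.2 k)ᴴ).trace.re)
    (fun x x' y => by
      simp only [Prod.fst_add, Prod.snd_add, Pi.add_apply, Matrix.add_mul, Matrix.trace_add,
        Complex.add_re, Finset.sum_add_distrib]
      ring)
    (fun r x y => by
      simp [Matrix.trace_smul, Finset.mul_sum, mul_add, mul_assoc])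
    (fun x y y' => by
      simp only [Prod.fst_add, Prod.snd_add, Pi.add_apply, Matrix.conjTranspose_add,
        Matrix.mul_add, Matrix.trace_add, Complex.add_re, Finset.sum_add_distrib]
      ring)
    (fun r x y => by
      simp [Matrix.trace_smul, Finset.mul_sum, mul_add, mul_left_comm])

lemma gForm_apply (x y : GV n) :
    gForm n x y = x.1 * y.1 + ∑ k, (x.2 k * (y.2 k)ᴴ).trace.re := rfl

open ComplexOrder in
lemma gForm_self_eq_zero {x : GV n} (h : gForm n x x = 0) : x = 0 := by
  have hnonneg : ∀ k, 0 ≤ (x.2 k * (x.2 k)ᴴ).trace :=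
    fun k => (Matrix.posSemidef_self_mul_conjTranspose _).trace_nonneg
  have hre : ∀ k, 0 ≤ (x.2 k * (x.2 k)ᴴ).trace.re := fun k => (Complex.nonneg_iff.mp (hnonneg k)).1
  rw [gForm_apply] at h
  have hsum := Finset.sum_nonneg fun k (_ : k ∈ Finset.univ) => hre k
  have h1 : x.1 = 0 := by nlinarith
  have h2 : ∀ k, x.2 k = 0 := by
    intro k
    have hk : (x.2 k * (x.2 k)ᴴ).trace.re = 0 :=
      (Finset.sum_eq_zero_iff_of_nonneg fun k _ => hre k).mp (by nlinarith) k (Finset.mem_univ k)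
    refine Matrix.trace_mul_conjTranspose_self_eq_zero_iff.mp (Complex.ext hk ?_)
    exact (Complex.nonneg_iff.mp (hnonneg k)).2.symm
  exact Prod.ext h1 (funext h2)

lemma trace_lie_mul_conjTranspose {m R : Type*} [Fintype m] [CommRing R] [StarRing R]
    {X : Matrix m m R} (hX : Xᴴ = -X) (A B : Matrix m m R) :
    (A * ⁅X, B⁆ᴴ).trace = -(⁅X, A⁆ * Bᴴ).trace := by
  rw [Ring.lie_def, Ring.lie_def, Matrix.conjTranspose_sub, Matrix.conjTranspose_mul,
    Matrix.conjTranspose_mul, hX]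
  simp only [Matrix.mul_neg, Matrix.neg_mul, Matrix.sub_mul, Matrix.mul_sub, Matrix.trace_sub,
    Matrix.trace_neg, Matrix.mul_assoc]
  rw [← Matrix.mul_assoc A, Matrix.trace_mul_comm (A * Bᴴ)]
  ring

lemma gForm_gBracket_right {x : GV n} (hx : x ∈ gSub n) (a b : GV n) :
    gForm n a (gBracket x b) = -gForm n (gBracket x a) b := by
  simp only [gForm_apply, gBracket, zero_mul, mul_zero, zero_add, ← Finset.sum_neg_distrib]
  refine Finset.sum_congr rfl fun k _ => ?_
  rw [trace_lie_mul_conjTranspose (mem_gSub.mp hx k).1, Complex.neg_re]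

end Qubits

structure IsSu2Copy {n : ℕ} (L : Submodule ℝ (GV n)) (j : Fin n) : Prop where
  le_gSub : L ≤ gSub n
  gBracket_mem : ∀ x ∈ L, ∀ y ∈ L, gBracket x y ∈ L
  disjoint_ker : Disjoint L (LinearMap.ker (Pj j))
  map_eq : L.map (Pj j) = su2

def qubitSupport {n : ℕ} (L : Submodule ℝ (GV n)) : Set (Fin n) :=
  {k | ¬ L ≤ LinearMap.ker (Pj k)}

namespace IsSu2Copy

variable {n : ℕ} {L : Submodule ℝ (GV n)} {j : Fin n}

lemma finrank_eq (hL : IsSu2Copy L j) : Module.finrank ℝ L = 3 := by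
  rw [← Submodule.finrank_map_of_disjoint_ker hL.disjoint_ker, hL.map_eq, finrank_su2]

lemma eq_of_gBracket_mem (hL : IsSu2Copy L j) {M : Submodule ℝ (GV n)} (hML : M ≤ L)
    (hM : ∀ x ∈ L, ∀ m ∈ M, gBracket x m ∈ M) (hbot : M ≠ ⊥) : M = L := by
  have hMj : Disjoint M (LinearMap.ker (Pj j)) := hL.disjoint_ker.mono_left hML
  have hsu : M.map (Pj j) = su2 := by
    refine eq_su2_of_lie_mem_of_ne_bot (hL.map_eq ▸ Submodule.map_mono hML) ?_ ?_
    · rintro X hX _ ⟨m, hm, rfl⟩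
      rw [← hL.map_eq] at hX
      obtain ⟨x, hx, rfl⟩ := hX
      exact ⟨_, hM x hx m hm, Pj_gBracket j x m⟩
    · intro h
      rw [← Submodule.finrank_eq_zero, Submodule.finrank_map_of_disjoint_ker hMj,
        Submodule.finrank_eq_zero] at h
      exact hbot h
  refine Submodule.eq_of_le_of_finrank_eq hML ?_
  rw [← Submodule.finrank_map_of_disjoint_ker hMj, hsu, ← hL.map_eq,
    Submodule.finrank_map_of_disjoint_ker hL.disjoint_ker]

lemma disjoint_ker_Pj (hL : IsSu2Copy L j) {k : Fin n} (hk : k ∈ qubitSupport L) :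
    Disjoint L (LinearMap.ker (Pj k)) := by
  rw [disjoint_iff]
  by_contra hbot
  refine hk (hL.eq_of_gBracket_mem inf_le_left (fun x hx m hm => ?_) hbot ▸ inf_le_right)
  obtain ⟨hmL, hmk⟩ := Submodule.mem_inf.mp hm
  exact Submodule.mem_inf.mpr ⟨hL.gBracket_mem x hx m hmL, gBracket_mem_ker_Pj_right x hmk⟩

lemma map_Pj_eq_su2 (hL : IsSu2Copy L j) {k : Fin n} (hk : k ∈ qubitSupport L) :
    L.map (Pj k) = su2 := by
  refine Submodule.eq_of_le_of_finrank_eq ?_ ?_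
  · rintro _ ⟨x, hx, rfl⟩
    exact mem_gSub.mp (hL.le_gSub hx) k
  · rw [Submodule.finrank_map_of_disjoint_ker (hL.disjoint_ker_Pj hk), hL.finrank_eq, finrank_su2]

/-- `L ≅ su(2)` is perfect, so it has no `u(1)` component. -/
lemma le_ker_fst (hL : IsSu2Copy L j) : L ≤ LinearMap.ker (LinearMap.fst ℝ ℝ _) := by
  obtain ⟨X, hX, Y, hY, hXY⟩ := exists_lie_ne_zero_su2
  rw [← hL.map_eq] at hX hY
  obtain ⟨x, hx, rfl⟩ := hX
  obtain ⟨y, hy, rfl⟩ := hY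
  have hbot : L ⊓ LinearMap.ker (LinearMap.fst ℝ ℝ _) ≠ ⊥ := by
    refine (Submodule.ne_bot_iff _).mpr ⟨gBracket x y, ⟨hL.gBracket_mem x hx y hy, rfl⟩, ?_⟩
    intro h
    exact hXY (by rw [← Pj_gBracket, h, map_zero])
  refine hL.eq_of_gBracket_mem inf_le_left (fun x hx m hm => ?_) hbot ▸ inf_le_right
  exact ⟨hL.gBracket_mem x hx m (Submodule.mem_inf.mp hm).1, rfl⟩

lemma mem_qubitSupport (hL : IsSu2Copy L j) : j ∈ qubitSupport L := by
  intro h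
  have := hL.finrank_eq
  rw [hL.disjoint_ker.eq_bot_of_le h, finrank_bot] at this
  omega

lemma le_gS_qubitSupport (hL : IsSu2Copy L j) : L ≤ gS (qubitSupport L) := by
  intro x hx
  refine mem_gS.mpr ⟨hL.le_ker_fst hx, fun k _ => mem_gSub.mp (hL.le_gSub hx) k, fun k hk => ?_⟩
  exact not_not.mp hk hx

lemma su2Block_qubitSupport (hL : IsSu2Copy L j) {ψ : QState n} (hLK : L ≤ stab ψ)
    (hK : ∀ x ∈ stab ψ, ∀ l ∈ L, gBracket x l ∈ L) : Su2Block ψ (qubitSupport L) := by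
  refine ⟨?_, fun S' hS' => ?_⟩
  · have := Submodule.finrank_mono (le_inf hLK hL.le_gS_qubitSupport)
    rw [hL.finrank_eq] at this
    omega
  rw [Submodule.finrank_eq_zero, eq_bot_iff]
  intro x hx
  obtain ⟨hxK, hxS'⟩ := Submodule.mem_inf.mp hx
  obtain ⟨hx1, hxsu, hx0⟩ := mem_gS.mp hxS'
  obtain ⟨k, hkS, hkS'⟩ := Set.exists_of_ssubset hS'
  -- `x` vanishes at `k`, where `P_k` is injective on `L`.
  have hcomm : ∀ l ∈ L, gBracket x l = 0 := fun l hl =>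
    Submodule.disjoint_def.mp (hL.disjoint_ker_Pj hkS) _ (hK x hxK l hl)
      (gBracket_mem_ker_Pj_left (hx0 k hkS') l)
  refine (Submodule.mem_bot ℝ).mpr (Prod.ext hx1 (funext fun m => ?_))
  by_cases hm : m ∈ S'
  · refine eq_zero_of_forall_lie_su2_eq_zero (hxsu m hm) fun Y hY => ?_
    rw [← hL.map_Pj_eq_su2 (hS'.subset hm)] at hY
    obtain ⟨l, hl, rfl⟩ := hY
    rw [← Pj_apply, ← Pj_gBracket, hcomm l hl, map_zero]
  · exact hx0 m hm

end IsSu2Copy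

section Stabilizer

variable {n : ℕ} (ψ : QState n) (j : Fin n)

def stabComplement : Submodule ℝ (GV n) :=
  stab ψ ⊓ (gForm n).orthogonal (stab ψ ⊓ LinearMap.ker (Pj j))

variable {ψ j}

lemma disjoint_stabComplement_ker_Pj : Disjoint (stabComplement ψ j) (LinearMap.ker (Pj j)) := by
  rw [Submodule.disjoint_def]
  intro x hx hxj
  exact gForm_self_eq_zero (hx.2 x ⟨hx.1, hxj⟩)

lemma finrank_map_Pj_stab_le :
    Module.finrank ℝ ((stab ψ).map (Pj j)) ≤ Module.finrank ℝ (stabComplement ψ j) := by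
  have hmap := (stab ψ).finrank_map_add_finrank_inf_ker (Pj j)
  have horth := (gForm n).finrank_le_finrank_inf_orthogonal_add (stab ψ)
    (stab ψ ⊓ LinearMap.ker (Pj j))
  rw [stabComplement]
  omega

lemma gBracket_mem_stabComplement {x l : GV n} (hx : x ∈ stab ψ) (hl : l ∈ stabComplement ψ j) :
    gBracket x l ∈ stabComplement ψ j := by
  refine ⟨gBracket_mem_stab hx hl.1, fun m hm => ?_⟩
  obtain ⟨hmK, hmj⟩ := Submodule.mem_inf.mp hm
  have hxm : gBracket x m ∈ stab ψ ⊓ LinearMap.ker (Pj j) :=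
    Submodule.mem_inf.mpr ⟨gBracket_mem_stab hx hmK, gBracket_mem_ker_Pj_right x hmj⟩
  rw [gForm_gBracket_right (stab_le_gSub ψ hx), hl.2 _ hxm, neg_zero]

lemma isSu2Copy_stabComplement (h : 1 < Module.finrank ℝ ((stab ψ).map (Pj j))) :
    IsSu2Copy (stabComplement ψ j) j where
  le_gSub := inf_le_left.trans (stab_le_gSub ψ)
  gBracket_mem _ hx _ hy := gBracket_mem_stabComplement hx.1 hy
  disjoint_ker := disjoint_stabComplement_ker_Pj
  map_eq := by
    refine eq_su2_of_lie_mem ?_ ?_ ?_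
    · rintro _ ⟨x, hx, rfl⟩
      exact mem_gSub.mp (stab_le_gSub ψ hx.1) j
    · rintro _ ⟨x, hx, rfl⟩ _ ⟨y, hy, rfl⟩
      exact ⟨_, gBracket_mem_stabComplement hx.1 hy, Pj_gBracket j x y⟩
    · rw [Submodule.finrank_map_of_disjoint_ker disjoint_stabComplement_ker_Pj]
      exact h.trans_le finrank_map_Pj_stab_le

lemma disjoint_ker_Pj_of_su2Block {S : Set (Fin n)} (hS : Su2Block ψ S) (hj : j ∈ S) :
    Disjoint (stab ψ ⊓ gS S) (LinearMap.ker (Pj j)) := by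
  have hbot : stab ψ ⊓ gS (S \ {j}) = ⊥ :=
    Submodule.finrank_eq_zero.mp (hS.2 _ (Set.sdiff_singleton_ssubset.mpr hj))
  rw [Submodule.disjoint_def]
  intro x hx hxj
  obtain ⟨hxK, hxS⟩ := Submodule.mem_inf.mp hx
  obtain ⟨hx1, hxsu, hx0⟩ := mem_gS.mp hxS
  have hx' : x ∈ stab ψ ⊓ gS (S \ {j}) := by
    refine Submodule.mem_inf.mpr ⟨hxK, mem_gS.mpr ⟨hx1, fun k hk => hxsu k hk.1, fun k hk => ?_⟩⟩
    by_cases hkj : k = j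
    · exact hkj ▸ hxj
    · exact hx0 k fun hkS => hk ⟨hkS, hkj⟩
  rwa [hbot] at hx'

end Stabilizer

theorem stmt3_general {n : ℕ} (ψ : QState n) (j : Fin n) :
    (∃ S : Set (Fin n), Su2Block ψ S ∧ j ∈ S) ↔
      1 < Module.finrank ℝ ↥((stab ψ).map (Pj j)) := by
  constructor
  · rintro ⟨S, hS, hj⟩
    calc 1 < Module.finrank ℝ ↥(stab ψ ⊓ gS S) := hS.1
      _ = Module.finrank ℝ ↥((stab ψ ⊓ gS S).map (Pj j)) :=
        (Submodule.finrank_map_of_disjoint_ker (disjoint_ker_Pj_of_su2Block hS hj)).symm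
      _ ≤ Module.finrank ℝ ↥((stab ψ).map (Pj j)) :=
        Submodule.finrank_mono (Submodule.map_mono inf_le_left)
  · intro h
    have hL := isSu2Copy_stabComplement h
    exact ⟨_, hL.su2Block_qubitSupport inf_le_left fun x hx l hl =>
      gBracket_mem_stabComplement hx hl, hL.mem_qubitSupport⟩

/-- Qubit `j` belongs to some `su(2)` block for `ψ` if and only if the
projection of `K_ψ` to the `j`-th `su(2)` summand has dimension `> 1`. -/
theorem stmt3 {n : ℕ} (hn : 1 ≤ n) (ψ : QState n) (hψ : ψ ≠ 0) (j : Fin n) :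
    (∃ S : Set (Fin n), Su2Block ψ S ∧ j ∈ S) ↔
      1 < Module.finrank ℝ ↥((stab ψ).map (Pj j)) :=
  stmt3_general ψ j
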